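/- With S, T' and A as in the setup, suppose A = Σ_{ℓ ∈ L} R^ℓ where L is a finite index set, each R^ℓ is a nonnegative matrix of rank at most one, and |L| ≤ r₊(S) + r₊(T'). Let L' ⊆ L be the set of ℓ such that R^ℓ has a nonzero entry in some position (i,(j,s)) with m < i ≤ m+p and s ≤ q. Then for every ℓ ∈ L' and every choice function c : {1,…,q} → {1,…,n}, the matrix R^ℓ has a nonzero entry in some position (i,(c(s),s)) with m < i ≤ m+p and s ∈ {1,…,q}. -/
import Mathlib

/-- The nonnegative rank of a matrix `M` with nonnegative real entries: the smallest `r`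
such that `M` is a sum of `r` nonnegative matrices each of rank at most one. -/
noncomputable def nnegRank {α β : Type*} [Fintype α] [Fintype β] (M : Matrix α β ℝ) : ℕ :=
  sInf { r : ℕ | ∃ R : Fin r → Matrix α β ℝ,
      (∀ ℓ i j, 0 ≤ R ℓ i j) ∧ (∀ ℓ, (R ℓ).rank ≤ 1) ∧ M = ∑ ℓ, R ℓ }

/-- The `(m+p+1) × (n·(q+1))` matrix `A` of the setup, built from an `m × n` matrix `S` and a
`p × q` matrix `T'`: its column indexed by `(j, s)` is `(S_j ; t'_s ; 0)` for `s ≤ q`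
(0-indexed: `s < q`) and `(S_j ; 0 ; 1)` for `s = q+1` (0-indexed: `s = q`). -/
def buildA {m n p q : ℕ} (S : Matrix (Fin m) (Fin n) ℝ) (T' : Matrix (Fin p) (Fin q) ℝ) :
    Matrix (Fin (m + p + 1)) (Fin n × Fin (q + 1)) ℝ :=
  fun i js =>
    if h1 : (i : ℕ) < m then S ⟨i, h1⟩ js.1
    else if h2 : (i : ℕ) < m + p then
      (if h3 : (js.2 : ℕ) < q then T' ⟨(i : ℕ) - m, by omega⟩ ⟨js.2, h3⟩ else 0)
    else (if (js.2 : ℕ) < q then 0 else 1)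

/-- A submatrix (with arbitrary row and column maps) has rank at most the rank of the matrix. -/
lemma rank_submatrix_le' {l o m n : Type*} [Fintype l] [Fintype o] [Fintype m] [Fintype n]
    [DecidableEq m] [DecidableEq n]
    (A : Matrix m n ℝ) (f : l → m) (g : o → n) :
    (A.submatrix f g).rank ≤ A.rank := by
  have hrow : (Matrix.of fun i k => if k = f i then (1 : ℝ) else 0) * A = A.submatrix f id := by
    ext i j
    rw [Matrix.mul_apply]
    simp [Matrix.of_apply, ite_mul]
  have hcol : A.submatrix f id * (Matrix.of fun k j => if k = g j then (1 : ℝ) else 0) =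
      A.submatrix f g := by
    ext i j
    rw [Matrix.mul_apply]
    simp [Matrix.of_apply, mul_ite]
  calc (A.submatrix f g).rank
      = ((Matrix.of fun i k => if k = f i then (1 : ℝ) else 0) * A *
          (Matrix.of fun k j => if k = g j then (1 : ℝ) else 0)).rank := by rw [hrow, hcol]
    _ ≤ ((Matrix.of fun i k => if k = f i then (1 : ℝ) else 0) * A).rank :=
        Matrix.rank_mul_le_left _ _
    _ ≤ A.rank := Matrix.rank_mul_le_right _ _

/-- In a matrix of rank at most one, nonzero entries at `(i₁,j₁)` and `(i₂,j₂)` force a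
nonzero entry at `(i₁,j₂)`. -/
lemma rank_one_cross {m n : Type*} [Fintype m] [Fintype n] [DecidableEq m] [DecidableEq n]
    (M : Matrix m n ℝ) (h : M.rank ≤ 1) {i₁ i₂ : m} {j₁ j₂ : n}
    (h11 : M i₁ j₁ ≠ 0) (h22 : M i₂ j₂ ≠ 0) : M i₁ j₂ ≠ 0 := by
  intro h12
  have hsub := (rank_submatrix_le' M ![i₁, i₂] ![j₁, j₂]).trans h
  have hdet : (M.submatrix ![i₁, i₂] ![j₁, j₂]).det ≠ 0 := by
    rw [Matrix.det_fin_two]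
    simp only [Matrix.submatrix_apply, Matrix.cons_val_zero, Matrix.cons_val_one,
      Matrix.head_cons]
    rw [h12, zero_mul, sub_zero]
    exact mul_ne_zero h11 h22
  have hunit : IsUnit (M.submatrix ![i₁, i₂] ![j₁, j₂]) :=
    (Matrix.isUnit_iff_isUnit_det _).2 (isUnit_iff_ne_zero.2 hdet)
  have h2 := Matrix.rank_of_isUnit _ hunit
  rw [h2] at hsub
  simp at hsub

/-- Any decomposition into nonnegative rank-at-most-one matrices bounds the nonnegative rank. -/
lemma nnegRank_le_card {α β ι : Type*} [Fintype α] [Fintype β] [Fintype ι]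
    (M : Matrix α β ℝ) (R : ι → Matrix α β ℝ)
    (h1 : ∀ ℓ i j, 0 ≤ R ℓ i j) (h2 : ∀ ℓ, (R ℓ).rank ≤ 1) (h3 : M = ∑ ℓ, R ℓ) :
    nnegRank M ≤ Fintype.card ι := by
  apply Nat.sInf_le
  refine ⟨fun k => R ((Fintype.equivFin ι).symm k), fun k i j => h1 _ _ _, fun k => h2 _, ?_⟩
  rw [h3]
  exact (Equiv.sum_comp (Fintype.equivFin ι).symm R).symm

/-- Claim 3: given a decomposition `A = Σ_{ℓ ∈ L} R^ℓ` into nonnegative rank-at-most-one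
matrices with `|L| ≤ r₊(S) + r₊(T')`, every `ℓ` in `L'` (the set of `ℓ` whose matrix has
support in a red position, i.e. row `i` with `m ≤ i < m+p` (0-indexed) and column `(j,s)`
with `s < q`) and every choice function `c : {1,…,q} → {1,…,n}` are such that `R^ℓ` has
support in some red position `(i, (c s, s))` with `m ≤ i < m + p` (0-indexed) and `s < q`. -/
theorem claim3 {m n p q : ℕ}
    (S : Matrix (Fin m) (Fin n) ℝ) (T' : Matrix (Fin p) (Fin q) ℝ)
    (hS : ∀ i j, 0 ≤ S i j) (hT' : ∀ i j, 0 ≤ T' i j)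
    {L : Type*} [Fintype L] (R : L → Matrix (Fin (m + p + 1)) (Fin n × Fin (q + 1)) ℝ)
    (hpos : ∀ ℓ i js, 0 ≤ R ℓ i js) (hrank : ∀ ℓ, (R ℓ).rank ≤ 1)
    (hsum : buildA S T' = ∑ ℓ, R ℓ)
    (hcard : Fintype.card L ≤ nnegRank S + nnegRank T') :
    ∀ ℓ : L,
      (∃ (i : Fin (m + p + 1)) (j : Fin n) (s : Fin (q + 1)),
        m ≤ (i : ℕ) ∧ (i : ℕ) < m + p ∧ (s : ℕ) < q ∧ R ℓ i (j, s) ≠ 0) →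
      ∀ c : Fin q → Fin n,
        ∃ (i : Fin (m + p + 1)) (s : Fin q),
          m ≤ (i : ℕ) ∧ (i : ℕ) < m + p ∧ R ℓ i (c s, s.castSucc) ≠ 0 := by
  classical
  intro ℓ₀ hred c
  by_contra hcon
  push_neg at hcon
  obtain ⟨i₀, j₀, s₀, hi₀m, hi₀p, hs₀, hR₀⟩ := hred
  -- entrywise domination by A
  have hle : ∀ ℓ i js, R ℓ i js ≤ buildA S T' i js := by
    intro ℓ i js
    calc R ℓ i js ≤ ∑ ℓ', R ℓ' i js :=
          Finset.single_le_sum (fun ℓ' _ => hpos ℓ' i js) (Finset.mem_univ ℓ)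
      _ = buildA S T' i js := by rw [hsum, Matrix.sum_apply]
  -- A vanishes in middle rows at the last-column block
  have hzero : ∀ ℓ (i : Fin (m + p + 1)), m ≤ (i : ℕ) → (i : ℕ) < m + p → ∀ j,
      R ℓ i (j, Fin.last q) = 0 := by
    intro ℓ i h1 h2 j
    have hA : buildA S T' i (j, Fin.last q) = 0 := by
      simp only [buildA]
      rw [dif_neg (by omega), dif_pos h2, dif_neg (by simp)]
    exact le_antisymm ((hle ℓ i _).trans_eq hA) (hpos ℓ i _)
  set P : L → Matrix (Fin p) (Fin q) ℝ :=
    fun ℓ => (R ℓ).submatrix (fun i : Fin p => (⟨m + i, by omega⟩ : Fin (m + p + 1)))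
      (fun s : Fin q => (c s, s.castSucc)) with hPdef
  set Q : L → Matrix (Fin m) (Fin n) ℝ :=
    fun ℓ => (R ℓ).submatrix (fun i : Fin m => (⟨i, by omega⟩ : Fin (m + p + 1)))
      (fun j : Fin n => (j, Fin.last q)) with hQdef
  have hPsum : T' = ∑ ℓ, P ℓ := by
    ext i s
    have h := congrFun (congrFun hsum (⟨m + i, by omega⟩ : Fin (m + p + 1))) (c s, s.castSucc)
    rw [Matrix.sum_apply] at h
    have hA : buildA S T' (⟨m + i, by omega⟩ : Fin (m + p + 1)) (c s, s.castSucc) = T' i s := by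
      simp only [buildA]
      rw [dif_neg (by omega), dif_pos (by omega), dif_pos (by simp [s.isLt])]
      congr 1 <;> apply Fin.ext <;> simp
    rw [hA] at h
    rw [h, Matrix.sum_apply]
    rfl
  have hQsum : S = ∑ ℓ, Q ℓ := by
    ext i j
    have h := congrFun (congrFun hsum (⟨i, by omega⟩ : Fin (m + p + 1))) (j, Fin.last q)
    rw [Matrix.sum_apply] at h
    have hA : buildA S T' (⟨i, by omega⟩ : Fin (m + p + 1)) (j, Fin.last q) = S i j := by
      simp only [buildA]
      rw [dif_pos i.isLt]
    rw [hA] at h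
    rw [h, Matrix.sum_apply]
    rfl
  -- nonzero-entry extraction
  have hne : ∀ {γ δ : Type} [Fintype γ] [Fintype δ] (M : Matrix γ δ ℝ), M ≠ 0 →
      ∃ a b, M a b ≠ 0 := by
    intro γ δ _ _ M hM
    by_contra h'
    push_neg at h'
    exact hM (by ext a b; exact h' a b)
  set ST : Finset L := Finset.univ.filter (fun ℓ => P ℓ ≠ 0) with hSTdef
  set SQ : Finset L := Finset.univ.filter (fun ℓ => Q ℓ ≠ 0) with hSQdef
  -- rank bounds on the restricted decompositions
  have hTle : nnegRank T' ≤ ST.card := by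
    have := nnegRank_le_card T' (fun x : {ℓ : L // P ℓ ≠ 0} => P x.1)
      (fun x i j => hpos _ _ _) (fun x => (rank_submatrix_le' _ _ _).trans (hrank _)) ?_
    · rwa [Fintype.card_subtype] at this
    · rw [hPsum, ← Finset.sum_filter_ne_zero Finset.univ]
      refine (Finset.sum_subtype (Finset.univ.filter fun ℓ => P ℓ ≠ 0) ?_ P)
      intro x; simp
  have hSle : nnegRank S ≤ SQ.card := by
    have := nnegRank_le_card S (fun x : {ℓ : L // Q ℓ ≠ 0} => Q x.1)
      (fun x i j => hpos _ _ _) (fun x => (rank_submatrix_le' _ _ _).trans (hrank _)) ?_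
    · rwa [Fintype.card_subtype] at this
    · rw [hQsum, ← Finset.sum_filter_ne_zero Finset.univ]
      refine (Finset.sum_subtype (Finset.univ.filter fun ℓ => Q ℓ ≠ 0) ?_ Q)
      intro x; simp
  -- disjointness
  have hdisj : Disjoint ST SQ := by
    rw [Finset.disjoint_left]
    intro ℓ hℓP hℓQ
    rw [hSTdef, Finset.mem_filter] at hℓP
    rw [hSQdef, Finset.mem_filter] at hℓQ
    obtain ⟨ip, sp, hp⟩ := hne _ hℓP.2
    obtain ⟨iq, jq, hq⟩ := hne _ hℓQ.2
    have hcross := rank_one_cross (R ℓ) (hrank ℓ) hp hq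
    exact hcross (hzero ℓ _ (Nat.le_add_right m _) (by simpa using ip.isLt) jq)
  -- ℓ₀ is in neither set
  have hℓ₀P : ℓ₀ ∉ ST := by
    rw [hSTdef, Finset.mem_filter]
    rintro ⟨-, hne0⟩
    apply hne0
    ext i s
    exact hcon ⟨m + i, by omega⟩ s (Nat.le_add_right m _) (by simpa using i.isLt)
  have hℓ₀Q : ℓ₀ ∉ SQ := by
    rw [hSQdef, Finset.mem_filter]
    rintro ⟨-, hne0⟩
    obtain ⟨iq, jq, hq⟩ := hne _ hne0
    have hcross := rank_one_cross (R ℓ₀) (hrank ℓ₀) hR₀ hq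
    exact hcross (hzero ℓ₀ i₀ hi₀m hi₀p jq)
  -- counting
  have hcount : ST.card + SQ.card + 1 ≤ Fintype.card L := by
    have hnotmem : ℓ₀ ∉ ST ∪ SQ := by
      rw [Finset.mem_union]; tauto
    have h1 : (insert ℓ₀ (ST ∪ SQ)).card = (ST ∪ SQ).card + 1 :=
      Finset.card_insert_of_notMem hnotmem
    have h2 : (ST ∪ SQ).card = ST.card + SQ.card := Finset.card_union_of_disjoint hdisj
    have h3 : (insert ℓ₀ (ST ∪ SQ)).card ≤ Fintype.card L := Finset.card_le_univ _
    omega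
  omega
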